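/- If the generalized Mycielskian M_3(K_m) of the complete graph K_m (m ≥ 2) admits a dual (n,d)-representation over a field F, then n/d ≥ m + 1/(m² − m + 1). -/

import Mathlib

/-!
Write `A i, B i, C i, Z` for the subspaces at `(i,0), (i,1), (i,2), z`, and `A'_j = Σ_{k ≠ j} A k`,
`C'_j = Σ_{k ≠ j} C k`. The `A i` are independent, `B j` meets `A'_j + C'_j` trivially and `Z`
meets `Σ C i` trivially. By the modular law, `T = ⋂_j (B j + A'_j)` meets `R = ⋂_j C'_j` only
inside `⋂_j A'_j = 0`, while `T` has codimension at most `m (n - m d)`; hence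
`dim R ≤ m n - m² d`. Every overlap `C a ∩ Σ_{i ∈ t} C i` with `a ∉ t` lies in `R`, so
`dim Σ C i ≥ m d - (m - 1) dim R`, and `Z ∩ Σ C i = 0` then forces
`(m + 1) d ≤ n + (m - 1)(m n - m² d)`, which rearranges to the bound.
-/

open Module

/-- The generalized Mycielskian `M_r(K_m)` of the complete graph `K_m`:
vertices are pairs `(i,k)` with `i ∈ Fin m`, `k ∈ Fin r`, plus an apex `z`. -/
def mycK (m r : ℕ) : SimpleGraph ((Fin m × Fin r) ⊕ Unit) :=
  SimpleGraph.fromRel (fun x y =>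
    match x, y with
    | .inl (v, i), .inl (w, j) =>
        v ≠ w ∧ (((i : ℕ) = 0 ∧ (j : ℕ) = 0) ∨ (j : ℕ) = (i : ℕ) + 1)
    | .inl (_, i), .inr _ => (i : ℕ) = r - 1
    | _, _ => False)

section ModularLattice

variable {α ι : Type*} [CompleteLattice α] [IsModularLattice α]

theorem inf_le_of_disjoint_sup {a b c : α} (h : Disjoint a (b ⊔ c)) : (a ⊔ b) ⊓ c ≤ b :=
  calc (a ⊔ b) ⊓ c ≤ (b ⊔ a) ⊓ (b ⊔ c) := inf_le_inf (sup_comm a b).le le_sup_right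
    _ = b ⊔ a ⊓ (b ⊔ c) := sup_inf_assoc_of_le a le_sup_left
    _ = b := by rw [h.eq_bot, sup_bot_eq]

theorem iSupIndep.biSup_inf_iInf_iSup_ne_eq_bot {A : ι → α} (hA : iSupIndep A) (s : Finset ι) :
    (⨆ k ∈ s, A k) ⊓ ⨅ j, ⨆ k ≠ j, A k = ⊥ := by
  classical
  induction s using Finset.induction_on with
  | empty => simp
  | insert j s hj ih =>
    have hsj : (⨆ k ∈ s, A k) ≤ ⨆ k ≠ j, A k :=
      biSup_mono fun k hk => ne_of_mem_of_not_mem hk hj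
    have hdisj : Disjoint (A j) ((⨆ k ∈ s, A k) ⊔ ⨆ k ≠ j, A k) := by
      rw [sup_eq_right.mpr hsj]; exact hA j
    rw [Finset.iSup_insert, ← le_bot_iff, ← ih]
    refine le_inf ?_ inf_le_right
    exact (inf_le_inf_left _ (iInf_le _ j)).trans (inf_le_of_disjoint_sup hdisj)

theorem iSupIndep.iInf_iSup_ne_eq_bot [Finite ι] [Nonempty ι] {A : ι → α} (hA : iSupIndep A) :
    ⨅ j, ⨆ k ≠ j, A k = ⊥ := by
  cases nonempty_fintype ι
  obtain ⟨j⟩ := ‹Nonempty ι›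
  rw [← le_bot_iff, ← hA.biSup_inf_iInf_iSup_ne_eq_bot Finset.univ]
  refine le_inf ((iInf_le _ j).trans ?_) le_rfl
  exact biSup_mono fun k _ => Finset.mem_univ k

theorem disjoint_iInf_sup_iSup_ne [Finite ι] [Nonempty ι] {A B C : ι → α} (hA : iSupIndep A)
    (hB : ∀ j, Disjoint (B j) ((⨆ k ≠ j, A k) ⊔ ⨆ k ≠ j, C k)) :
    Disjoint (⨅ j, B j ⊔ ⨆ k ≠ j, A k) (⨅ j, ⨆ k ≠ j, C k) := by
  rw [disjoint_iff, ← le_bot_iff, ← hA.iInf_iSup_ne_eq_bot]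
  exact le_iInf fun j =>
    (inf_le_inf (iInf_le _ j) (iInf_le _ j)).trans (inf_le_of_disjoint_sup (hB j))

end ModularLattice

theorem inf_biSup_le_iInf_iSup_ne {α ι : Type*} [CompleteLattice α] (C : ι → α) {a : ι}
    {t : Finset ι} (ha : a ∉ t) : C a ⊓ ⨆ i ∈ t, C i ≤ ⨅ j, ⨆ k ≠ j, C k := by
  refine le_iInf fun j => ?_
  by_cases hj : j = a
  · subst hj
    exact inf_le_right.trans (biSup_mono fun i hi => ne_of_mem_of_not_mem hi ha)
  · exact inf_le_left.trans (le_iSup₂ (f := fun k (_ : k ≠ j) => C k) a (Ne.symm hj))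

section Finrank

variable {K V ι : Type*} [DivisionRing K] [AddCommGroup V] [Module K V] [FiniteDimensional K V]

theorem iSupIndep.finrank_biSup {f : ι → Submodule K V} (hf : iSupIndep f) (s : Finset ι) :
    finrank K ↥(⨆ i ∈ s, f i) = ∑ i ∈ s, finrank K (f i) := by
  classical
  induction s using Finset.induction_on with
  | empty => simp
  | insert j s hj ih =>
    have hdisj : Disjoint (f j) (⨆ i ∈ s, f i) := hf.disjoint_biSup (y := s) hj
    have h := Submodule.finrank_sup_add_finrank_inf_eq (f j) (⨆ i ∈ s, f i)
    rw [hdisj.eq_bot, finrank_bot, add_zero] at h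
    rw [Finset.iSup_insert, Finset.sum_insert hj, h, ih]

theorem finrank_add_sum_finrank_le_finrank_biInf_add (g : ι → Submodule K V) (s : Finset ι) :
    finrank K V + ∑ j ∈ s, finrank K (g j) ≤ finrank K ↥(⨅ j ∈ s, g j) + s.card * finrank K V := by
  classical
  induction s using Finset.induction_on with
  | empty => rw [show (⨅ j ∈ (∅ : Finset ι), g j) = ⊤ by simp, finrank_top]; simp
  | insert j s hj ih =>
    have h := Submodule.finrank_sup_add_finrank_inf_eq (g j) (⨅ i ∈ s, g i)
    have hle := Submodule.finrank_le (g j ⊔ ⨅ i ∈ s, g i)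
    rw [Finset.iInf_insert, Finset.sum_insert hj, Finset.card_insert_of_notMem hj, add_one_mul]
    lia

theorem sum_finrank_le_finrank_biSup_add (f : ι → Submodule K V) {k : ℕ}
    (h : ∀ a (t : Finset ι), a ∉ t → finrank K ↥(f a ⊓ ⨆ i ∈ t, f i) ≤ k) (s : Finset ι) :
    ∑ i ∈ s, finrank K (f i) ≤ finrank K ↥(⨆ i ∈ s, f i) + (s.card - 1) * k := by
  classical
  induction s using Finset.induction_on with
  | empty => simp
  | insert a s ha ih =>
    have hsup := Submodule.finrank_sup_add_finrank_inf_eq (f a) (⨆ i ∈ s, f i)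
    have hover := h a s ha
    rw [Finset.iSup_insert, Finset.sum_insert ha, Finset.card_insert_of_notMem ha,
      Nat.add_sub_cancel]
    rcases s.eq_empty_or_nonempty with rfl | hs
    · simpa using Submodule.finrank_mono (le_sup_left : f a ≤ f a ⊔ ⨆ i ∈ (∅ : Finset ι), f i)
    · have hk : (s.card - 1) * k + k = s.card * k := by
        rw [← add_one_mul, Nat.sub_one_add_one hs.card_ne_zero]
      lia

theorem finrank_add_card_mul_le_finrank_iInf_sup_add [Fintype ι] [Nonempty ι]
    {A B : ι → Submodule K V} {d : ℕ} (hA : iSupIndep A)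
    (hB : ∀ j, Disjoint (B j) (⨆ k ≠ j, A k)) (hAd : ∀ i, finrank K (A i) = d)
    (hBd : ∀ i, finrank K (B i) = d) :
    finrank K V + Fintype.card ι * (Fintype.card ι * d) ≤
      finrank K ↥(⨅ j, B j ⊔ ⨆ k ≠ j, A k) + Fintype.card ι * finrank K V := by
  classical
  have hA' (j : ι) : finrank K ↥(⨆ k ≠ j, A k) = (Fintype.card ι - 1) * d := by
    have h := hA.finrank_biSup (Finset.univ.erase j)
    rwa [show (⨆ k ∈ Finset.univ.erase j, A k) = ⨆ k ≠ j, A k by simp,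
      Finset.sum_congr rfl fun i _ => hAd i, Finset.sum_const, Finset.card_erase_of_mem
      (Finset.mem_univ j), Finset.card_univ, smul_eq_mul] at h
  have hBA (j : ι) : finrank K ↥(B j ⊔ ⨆ k ≠ j, A k) = Fintype.card ι * d := by
    have h := Submodule.finrank_sup_add_finrank_inf_eq (B j) (⨆ k ≠ j, A k)
    rwa [(hB j).eq_bot, finrank_bot, add_zero, hBd, hA', add_comm, ← add_one_mul,
      Nat.sub_one_add_one Fintype.card_ne_zero] at h
  have h := finrank_add_sum_finrank_le_finrank_biInf_add (fun j => B j ⊔ ⨆ k ≠ j, A k)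
    Finset.univ
  rwa [show (⨅ j ∈ Finset.univ, B j ⊔ ⨆ k ≠ j, A k) = ⨅ j, B j ⊔ ⨆ k ≠ j, A k by simp,
    Finset.sum_congr rfl fun j _ => hBA j, Finset.sum_const, Finset.card_univ,
    smul_eq_mul] at h

theorem card_add_one_div_le_finrank_div [Fintype ι] [Nonempty ι] {A B C : ι → Submodule K V}
    {Z : Submodule K V} {d : ℕ} (hd : 0 < d) (hA : iSupIndep A)
    (hB : ∀ j, Disjoint (B j) ((⨆ k ≠ j, A k) ⊔ ⨆ k ≠ j, C k)) (hZ : Disjoint Z (⨆ k, C k))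
    (hAd : ∀ i, finrank K (A i) = d) (hBd : ∀ i, finrank K (B i) = d)
    (hCd : ∀ i, finrank K (C i) = d) (hZd : finrank K Z = d) :
    (Fintype.card ι : ℝ) + 1 / ((Fintype.card ι : ℝ) ^ 2 - Fintype.card ι + 1) ≤
      finrank K V / d := by
  set m := Fintype.card ι
  set N := finrank K V
  set T := ⨅ j, B j ⊔ ⨆ k ≠ j, A k
  set R := ⨅ j, ⨆ k ≠ j, C k
  have hT : N + m * (m * d) ≤ finrank K T + m * N :=
    finrank_add_card_mul_le_finrank_iInf_sup_add hA (fun j => (hB j).mono_right le_sup_left)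
      hAd hBd
  have hTR : finrank K T + finrank K R ≤ N :=
    Submodule.finrank_add_finrank_le_of_disjoint (disjoint_iInf_sup_iSup_ne hA hB)
  have hC : m * d ≤ finrank K ↥(⨆ k, C k) + (m - 1) * finrank K R := by
    have h := sum_finrank_le_finrank_biSup_add C
      (fun _ _ ha => Submodule.finrank_mono (inf_biSup_le_iInf_iSup_ne C ha)) Finset.univ
    rwa [show (⨆ k ∈ Finset.univ, C k) = ⨆ k, C k by simp,
      Finset.sum_congr rfl fun i _ => hCd i, Finset.sum_const, Finset.card_univ,
      smul_eq_mul] at h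
  have hZC : d + finrank K ↥(⨆ k, C k) ≤ N := hZd ▸ Submodule.finrank_add_finrank_le_of_disjoint hZ
  have hm : 1 ≤ m := Fintype.card_pos
  rify [hm] at hd hT hTR hC hZC
  rify at hm
  have hq : (0 : ℝ) < m ^ 2 - m + 1 := by nlinarith
  have hR : (finrank K R : ℝ) ≤ m * N - m ^ 2 * d := by nlinarith
  rw [add_div' _ _ _ hq.ne', div_le_div_iff₀ hq hd]
  nlinarith [mul_le_mul_of_nonneg_left hR (sub_nonneg.mpr hm)]

end Finrank

theorem haemers_lower_bound_M3 (F : Type*) [Field F] (m n d : ℕ) (hm : 2 ≤ m)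
    (hd : 0 < d)
    (X : (Fin m × Fin 3) ⊕ Unit → Submodule F (Fin n → F))
    (hdim : ∀ u, finrank F (X u) = d)
    (hrep : ∀ u, X u ⊓ (⨆ w ∈ (mycK m 3).neighborSet u, X w) = ⊥) :
    (m : ℝ) + 1 / ((m : ℝ) ^ 2 - m + 1) ≤ (n : ℝ) / d := by
  have : Nonempty (Fin m) := ⟨⟨0, by omega⟩⟩
  have hdisj (u) {Y} (hY : Y ≤ ⨆ w ∈ (mycK m 3).neighborSet u, X w) : Disjoint (X u) Y :=
    (disjoint_iff.mpr (hrep u)).mono_right hY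
  have hadj {u w} (h : (mycK m 3).Adj u w) : X w ≤ ⨆ w ∈ (mycK m 3).neighborSet u, X w :=
    le_biSup X h
  have hbound := card_add_one_div_le_finrank_div (A := fun i => X (.inl (i, 0)))
    (B := fun i => X (.inl (i, 1))) (C := fun i => X (.inl (i, 2))) (Z := X (.inr ())) hd
    (iSupIndep_def.mpr fun i => hdisj _ (iSup₂_le fun k hk => hadj (by simp [mycK, hk, Ne.symm hk])))
    (fun j => hdisj _ (sup_le (iSup₂_le fun k hk => hadj (by simp [mycK, hk, Ne.symm hk]))
      (iSup₂_le fun k hk => hadj (by simp [mycK, hk, Ne.symm hk]))))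
    (hdisj _ (iSup_le fun k => hadj (by simp [mycK])))
    (fun _ => hdim _) (fun _ => hdim _) (fun _ => hdim _) (hdim _)
  simpa [Module.finrank_fin_fun] using hbound
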